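/- Let m be an odd positive integer and let r > 0. Define f(λ) = (λ^m - i)^{-1} for real λ (well-defined since λ^m is real, so λ^m - i ≠ 0). Then there exists a₀ > 0 such that for every real a with 0 < a ≤ a₀ there exists a constant C with |f(λ) - f(μ)| ≤ C · |(λ - ia)^{-m} - (μ - ia)^{-m}| for all real λ, μ with |λ| ≥ 2r and |μ| ≥ 2r. -/

import Mathlib

/-!
Write `p(x, y) = ∑_{i<m} x^i y^(m-1-i)`, so that `x^m - y^m = p(x, y) (x - y)`. Then
`f(λ) - f(μ) = -p(λ, μ) (λ - μ) / ((λ^m - i)(μ^m - i))` and, since the shifted points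
`λ - ia`, `μ - ia` have the same difference, `g(λ) - g(μ) = -p(λ - ia, μ - ia) (λ - μ) /
((λ - ia)^m (μ - ia)^m)`. The factor `(λ - μ)` cancels, `|λ - ia|^m ≤ 2^m |λ^m - i|` once
`a ≤ |λ|/2`, and it remains to compare the two values of `p`. For real `λ, μ` and odd `m`,
`|p(λ, μ)| ≥ M^(m-1)/2` with `M = max(|λ|, |μ|)`: all terms are nonnegative when `λμ ≥ 0`, and
otherwise `|p| (|λ| + |μ|) = |λ|^m + |μ|^m`. Shifting both arguments by `-ia` moves `p` by at
most `m(m-1)(2M)^(m-2) a`, which is `≤ M^(m-1)/4` for `a ≤ r / (m² 2^m)` since `M ≥ 2r`. Hence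
`|p(λ, μ)| ≤ m M^(m-1) ≤ 4m |p(λ - ia, μ - ia)|`.
-/

open Finset Complex

def geomSum₂ {R : Type*} [CommRing R] (n : ℕ) (x y : R) : R :=
  ∑ i ∈ range n, x ^ i * y ^ (n - 1 - i)

section CommRing

variable {R : Type*} [CommRing R]

theorem geomSum₂_mul_sub (n : ℕ) (x y : R) : geomSum₂ n x y * (x - y) = x ^ n - y ^ n :=
  geom_sum₂_mul x y n

theorem geomSum₂_neg_neg (n : ℕ) (x y : R) :
    geomSum₂ n (-x) (-y) = (-1) ^ (n - 1) * geomSum₂ n x y := by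
  rw [geomSum₂, geomSum₂, mul_sum]
  refine sum_congr rfl fun i hi => ?_
  have hsign : (-1 : R) ^ (n - 1) = (-1) ^ i * (-1) ^ (n - 1 - i) := by
    rw [← pow_add, Nat.add_sub_cancel' (Nat.le_sub_one_of_lt (mem_range.1 hi))]
  rw [neg_pow x, neg_pow y, hsign]
  ring

end CommRing

section Normed

variable {R : Type*} [NormedCommRing R] [NormOneClass R] {x y x' y' : R} {B e : ℝ}

theorem norm_geomSum₂_le (hx : ‖x‖ ≤ B) (hy : ‖y‖ ≤ B) (n : ℕ) :
    ‖geomSum₂ n x y‖ ≤ n * B ^ (n - 1) := by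
  have hB : 0 ≤ B := (norm_nonneg x).trans hx
  calc ‖geomSum₂ n x y‖ ≤ ∑ i ∈ range n, ‖x ^ i * y ^ (n - 1 - i)‖ := norm_sum_le _ _
    _ ≤ ∑ _i ∈ range n, B ^ (n - 1) := sum_le_sum fun i hi => ?_
    _ = n * B ^ (n - 1) := by simp
  calc ‖x ^ i * y ^ (n - 1 - i)‖ ≤ B ^ i * B ^ (n - 1 - i) :=
        norm_mul_le_of_le ((norm_pow_le x i).trans (by gcongr))
          ((norm_pow_le y _).trans (by gcongr))
    _ = B ^ (n - 1) := by
      rw [← pow_add, Nat.add_sub_cancel' (Nat.le_sub_one_of_lt (mem_range.1 hi))]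

theorem norm_pow_sub_pow_le (hx : ‖x‖ ≤ B) (hy : ‖y‖ ≤ B) (n : ℕ) :
    ‖x ^ n - y ^ n‖ ≤ ‖x - y‖ * n * B ^ (n - 1) := by
  rw [← geomSum₂_mul_sub, mul_comm, mul_assoc]
  exact (norm_mul_le _ _).trans (by gcongr; exact norm_geomSum₂_le hx hy n)

theorem norm_pow_mul_pow_sub_pow_mul_pow_le (hx : ‖x‖ ≤ B) (hy : ‖y‖ ≤ B) (hx' : ‖x'‖ ≤ B)
    (hy' : ‖y'‖ ≤ B) (hdx : ‖x - x'‖ ≤ e) (hdy : ‖y - y'‖ ≤ e) (i j : ℕ) :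
    ‖x ^ i * y ^ j - x' ^ i * y' ^ j‖ ≤ ↑(i + j) * B ^ (i + j - 1) * e := by
  have hB : 0 ≤ B := (norm_nonneg x).trans hx
  have hpow : ∀ p q : ℕ, B ^ p * ((q : ℝ) * B ^ (q - 1)) = q * B ^ (p + q - 1) := by
    rintro p (_ | q)
    · simp
    · simp only [Nat.add_sub_cancel, ← Nat.add_assoc, pow_add]
      ring
  calc ‖x ^ i * y ^ j - x' ^ i * y' ^ j‖
        = ‖x ^ i * (y ^ j - y' ^ j) + (x ^ i - x' ^ i) * y' ^ j‖ := by ring_nf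
    _ ≤ B ^ i * (e * j * B ^ (j - 1)) + e * i * B ^ (i - 1) * B ^ j := by
      refine (norm_add_le _ _).trans
        (add_le_add (norm_mul_le_of_le ?_ ?_) (norm_mul_le_of_le ?_ ?_))
      · exact (norm_pow_le x i).trans (by gcongr)
      · exact (norm_pow_sub_pow_le hy hy' j).trans (by gcongr)
      · exact (norm_pow_sub_pow_le hx hx' i).trans (by gcongr)
      · exact (norm_pow_le y' j).trans (by gcongr)
    _ = ↑(i + j) * B ^ (i + j - 1) * e := by
      have h1 := hpow i j
      have h2 := hpow j i
      rw [add_comm j i] at h2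
      push_cast
      linear_combination e * h1 + e * h2

theorem norm_geomSum₂_sub_geomSum₂_le (hx : ‖x‖ ≤ B) (hy : ‖y‖ ≤ B) (hx' : ‖x'‖ ≤ B)
    (hy' : ‖y'‖ ≤ B) (hdx : ‖x - x'‖ ≤ e) (hdy : ‖y - y'‖ ≤ e) (n : ℕ) :
    ‖geomSum₂ n x y - geomSum₂ n x' y'‖ ≤ n * ↑(n - 1) * B ^ (n - 2) * e := by
  rw [geomSum₂, geomSum₂, ← sum_sub_distrib]
  calc _ ≤ ∑ i ∈ range n, ‖x ^ i * y ^ (n - 1 - i) - x' ^ i * y' ^ (n - 1 - i)‖ :=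
        norm_sum_le _ _
    _ ≤ ∑ _i ∈ range n, ↑(n - 1) * B ^ (n - 2) * e := sum_le_sum fun i hi => ?_
    _ = n * ↑(n - 1) * B ^ (n - 2) * e := by rw [sum_const, card_range, nsmul_eq_mul]; ring
  have hi : i + (n - 1 - i) = n - 1 := Nat.add_sub_cancel' (Nat.le_sub_one_of_lt (mem_range.1 hi))
  have := norm_pow_mul_pow_sub_pow_mul_pow_le hx hy hx' hy' hdx hdy i (n - 1 - i)
  rwa [hi, show n - 1 - 1 = n - 2 by omega] at this

end Normed

theorem pow_max_abs_le_two_mul_abs_geomSum₂ {n : ℕ} (hn : Odd n) (x y : ℝ) :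
    max |x| |y| ^ (n - 1) ≤ 2 * |geomSum₂ n x y| := by
  wlog hy : 0 ≤ y generalizing x y
  · simpa [geomSum₂_neg_neg, (Nat.Odd.sub_odd hn odd_one).neg_one_pow] using
      this (-x) (-y) (by linarith)
  rcases le_or_gt 0 x with hx | hx
  · have hterm : ∀ i ∈ range n, 0 ≤ x ^ i * y ^ (n - 1 - i) := fun i _ => by positivity
    have hmax : max |x| |y| ^ (n - 1) ≤ geomSum₂ n x y := by
      rw [abs_of_nonneg hx, abs_of_nonneg hy]
      rcases le_total x y with hxy | hxy
      · rw [max_eq_right hxy]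
        simpa [geomSum₂] using single_le_sum hterm (mem_range.2 hn.pos)
      · rw [max_eq_left hxy]
        simpa [geomSum₂] using single_le_sum hterm (mem_range.2 (Nat.sub_lt hn.pos one_pos))
    have hnonneg : 0 ≤ geomSum₂ n x y := sum_nonneg hterm
    rw [abs_of_nonneg hnonneg]
    linarith
  · set M := max |x| |y|
    have hsub : |x - y| = |x| + |y| := by
      rw [abs_of_neg hx, abs_of_nonneg hy, abs_of_neg (by linarith)]; ring
    have hsub_pow : |x ^ n - y ^ n| = |x| ^ n + |y| ^ n := by
      rw [abs_of_neg hx, abs_of_nonneg hy, hn.neg_pow,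
        abs_of_neg (by linarith [hn.pow_neg hx, pow_nonneg hy n])]
      ring
    have hkey : |geomSum₂ n x y| * (|x| + |y|) = |x| ^ n + |y| ^ n := by
      rw [← hsub, ← hsub_pow, ← abs_mul, geomSum₂_mul_sub]
    have hM : M ^ n ≤ |x| ^ n + |y| ^ n := by
      rcases max_choice |x| |y| with h | h <;> simp only [M, h] <;>
        linarith [pow_nonneg (abs_nonneg x) n, pow_nonneg (abs_nonneg y) n]
    have hpos : 0 < |x| + |y| := by linarith [abs_pos.2 hx.ne, abs_nonneg y]
    refine le_of_mul_le_mul_right ?_ hpos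
    calc M ^ (n - 1) * (|x| + |y|) ≤ M ^ (n - 1) * (2 * M) := by
          gcongr; linarith [le_max_left |x| |y|, le_max_right |x| |y|]
      _ = 2 * M ^ n := by rw [mul_left_comm, ← pow_succ, Nat.sub_add_cancel hn.pos]
      _ ≤ 2 * |geomSum₂ n x y| * (|x| + |y|) := by rw [mul_assoc, hkey]; gcongr

theorem norm_inv_pow_sub_sub_inv_pow_sub {𝕜 : Type*} [NormedField 𝕜] {n : ℕ} {x y c : 𝕜}
    (hx : x ^ n ≠ c) (hy : y ^ n ≠ c) :
    ‖(x ^ n - c)⁻¹ - (y ^ n - c)⁻¹‖ =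
      ‖geomSum₂ n x y‖ * ‖x - y‖ / (‖x ^ n - c‖ * ‖y ^ n - c‖) := by
  rw [inv_sub_inv (sub_ne_zero.2 hx) (sub_ne_zero.2 hy),
    show y ^ n - c - (x ^ n - c) = -(geomSum₂ n x y * (x - y)) by rw [geomSum₂_mul_sub]; ring,
    norm_div, norm_neg, norm_mul, norm_mul]

theorem norm_ofReal_sub_mul_I_pow_le {l a : ℝ} (ha : 0 ≤ a) (hal : a ≤ |l|) (n : ℕ) :
    ‖(l : ℂ) - a * I‖ ^ n ≤ 2 ^ n * ‖(l : ℂ) ^ n - I‖ := by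
  have hshift : ‖(l : ℂ) - a * I‖ ≤ 2 * |l| := by
    calc ‖(l : ℂ) - a * I‖ ≤ ‖(l : ℂ)‖ + ‖(a : ℂ) * I‖ := norm_sub_le _ _
      _ = |l| + a := by simp [abs_of_nonneg ha]
      _ ≤ 2 * |l| := by linarith
  calc ‖(l : ℂ) - a * I‖ ^ n ≤ (2 * |l|) ^ n := by gcongr
    _ = 2 ^ n * |l ^ n| := by rw [mul_pow, abs_pow]
    _ ≤ 2 ^ n * ‖(l : ℂ) ^ n - I‖ := by
      gcongr
      have h := abs_re_le_norm (((l ^ n : ℝ) : ℂ) - I)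
      rwa [sub_re, ofReal_re, I_re, sub_zero, ofReal_pow] at h

theorem natCast_mul_pred_mul_two_mul_pow_le {n : ℕ} {M a : ℝ} (ha : 0 ≤ a)
    (hsmall : n ^ 2 * 2 ^ n * a ≤ M) :
    (n : ℝ) * ↑(n - 1) * (2 * M) ^ (n - 2) * a ≤ M ^ (n - 1) / 4 := by
  rcases Nat.lt_or_ge n 2 with hn | hn
  · rw [show n - 1 = 0 by omega]
    simp
  obtain ⟨k, rfl⟩ : ∃ k, n = k + 2 := ⟨n - 2, by omega⟩
  have hM : 0 ≤ M := (by positivity : (0 : ℝ) ≤ _).trans hsmall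
  have hcoef : ((k : ℝ) + 2) * (k + 1) * 2 ^ k * a ≤ M / 4 := by
    have h4 : (2 : ℝ) ^ (k + 2) = 4 * 2 ^ k := by ring
    have hpos : (0 : ℝ) ≤ (k + 2) * 2 ^ k * a := by positivity
    push_cast at hsmall
    rw [h4] at hsmall
    linarith
  simp only [Nat.add_sub_cancel, show k + 2 - 1 = k + 1 by omega]
  push_cast
  calc ((k : ℝ) + 2) * (k + 1) * (2 * M) ^ k * a = ((k + 2) * (k + 1) * 2 ^ k * a) * M ^ k := by
        rw [mul_pow]; ring
    _ ≤ M / 4 * M ^ k := by gcongr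
    _ = M ^ (k + 1) / 4 := by ring

theorem norm_geomSum₂_le_mul_norm_geomSum₂_sub_mul_I {n : ℕ} (hn : Odd n) {l μ a : ℝ}
    (ha : 0 ≤ a) (hsmall : n ^ 2 * 2 ^ n * a ≤ max |l| |μ|) :
    ‖geomSum₂ n (l : ℂ) μ‖ ≤ 4 * n * ‖geomSum₂ n ((l : ℂ) - a * I) (μ - a * I)‖ := by
  set M := max |l| |μ|
  have hn1 : (1 : ℝ) ≤ n := by exact_mod_cast hn.pos
  have haM : a ≤ M :=
    (le_mul_of_one_le_left ha (one_le_mul_of_one_le_of_one_le (by nlinarith)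
      (one_le_pow₀ one_le_two))).trans hsmall
  have hreal : ∀ t : ℝ, |t| ≤ M → ‖(t : ℂ)‖ ≤ 2 * M := fun t ht => by
    rw [norm_real, Real.norm_eq_abs]; linarith [abs_nonneg t]
  have hshift : ∀ t : ℝ, |t| ≤ M → ‖(t : ℂ) - a * I‖ ≤ 2 * M := fun t ht =>
    (norm_sub_le _ _).trans (by simp [abs_of_nonneg ha]; linarith)
  have hdist : ∀ t : ℝ, ‖(t : ℂ) - ((t : ℂ) - a * I)‖ ≤ a := fun t => by
    simp [abs_of_nonneg ha]
  have hdiff := norm_geomSum₂_sub_geomSum₂_le (hreal l (le_max_left ..))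
    (hreal μ (le_max_right ..)) (hshift l (le_max_left ..)) (hshift μ (le_max_right ..))
    (hdist l) (hdist μ) n
  have hlower : M ^ (n - 1) ≤ 2 * ‖geomSum₂ n (l : ℂ) μ‖ := by
    have hcast : geomSum₂ n (l : ℂ) μ = ((geomSum₂ n l μ : ℝ) : ℂ) := by simp [geomSum₂]
    rw [hcast, norm_real, Real.norm_eq_abs]
    exact pow_max_abs_le_two_mul_abs_geomSum₂ hn l μ
  have hupper : ‖geomSum₂ n (l : ℂ) μ‖ ≤ n * M ^ (n - 1) :=
    norm_geomSum₂_le (by simp [M]) (by simp [M]) n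
  have hshifted : M ^ (n - 1) ≤ 4 * ‖geomSum₂ n ((l : ℂ) - a * I) (μ - a * I)‖ := by
    linarith [natCast_mul_pred_mul_two_mul_pow_le ha hsmall,
      norm_sub_norm_le (geomSum₂ n (l : ℂ) μ) (geomSum₂ n ((l : ℂ) - a * I) (μ - a * I))]
  calc ‖geomSum₂ n (l : ℂ) μ‖ ≤ n * M ^ (n - 1) := hupper
    _ ≤ n * (4 * ‖geomSum₂ n ((l : ℂ) - a * I) (μ - a * I)‖) := by gcongr
    _ = _ := by ring

theorem kernel_bounded_at_infinity_general (m : ℕ) (hodd : Odd m)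
    (r : ℝ) (hr : 0 < r) :
    ∃ a₀ > 0, ∀ a : ℝ, 0 < a → a ≤ a₀ → ∃ C : ℝ,
      ∀ l μ : ℝ, 2 * r ≤ |l| → 2 * r ≤ |μ| →
        ‖((l : ℂ) ^ m - Complex.I)⁻¹ - ((μ : ℂ) ^ m - Complex.I)⁻¹‖ ≤
          C * ‖((l : ℂ) - (a : ℂ) * Complex.I) ^ (-(m : ℤ)) -
            ((μ : ℂ) - (a : ℂ) * Complex.I) ^ (-(m : ℤ))‖ := by
  have hm : 0 < m := hodd.pos
  refine ⟨r / (m ^ 2 * 2 ^ m), by positivity,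
    fun a ha ha₀ => ⟨4 * m * 4 ^ m, fun l μ hl hμ => ?_⟩⟩
  have hsmall : (m : ℝ) ^ 2 * 2 ^ m * a ≤ r := by
    rwa [le_div_iff₀ (by positivity), mul_comm] at ha₀
  have har : a ≤ r := (le_mul_of_one_le_left ha.le (one_le_mul_of_one_le_of_one_le
    (one_le_pow₀ (by exact_mod_cast hm)) (one_le_pow₀ one_le_two))).trans hsmall
  have hz : ∀ t : ℝ, (t : ℂ) - a * I ≠ 0 := fun t h => by
    simpa [ha.ne'] using congrArg im h
  have hw : ∀ t : ℝ, (t : ℂ) ^ m ≠ I := fun t h => by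
    simpa [← ofReal_pow] using congrArg im h
  have hg := norm_inv_pow_sub_sub_inv_pow_sub (c := 0) (pow_ne_zero m (hz l)) (pow_ne_zero m (hz μ))
  simp only [sub_zero, sub_sub_sub_cancel_right, norm_pow] at hg
  rw [zpow_neg, zpow_natCast, zpow_neg, zpow_natCast, hg,
    norm_inv_pow_sub_sub_inv_pow_sub (hw l) (hw μ), mul_div_assoc',
    div_le_div_iff₀
      (mul_pos (norm_pos_iff.2 (sub_ne_zero.2 (hw l))) (norm_pos_iff.2 (sub_ne_zero.2 (hw μ))))
      (mul_pos (pow_pos (norm_pos_iff.2 (hz l)) m) (pow_pos (norm_pos_iff.2 (hz μ)) m))]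
  have hp := norm_geomSum₂_le_mul_norm_geomSum₂_sub_mul_I hodd ha.le
    (hsmall.trans (by linarith [le_max_left |l| |μ|]) : (m : ℝ) ^ 2 * 2 ^ m * a ≤ max |l| |μ|)
  have hzl := norm_ofReal_sub_mul_I_pow_le ha.le (by linarith) m (l := l)
  have hzμ := norm_ofReal_sub_mul_I_pow_le ha.le (by linarith) m (l := μ)
  calc _ ≤ 4 * m * ‖geomSum₂ m ((l : ℂ) - a * I) (μ - a * I)‖ * ‖(l : ℂ) - μ‖ *
        (2 ^ m * ‖(l : ℂ) ^ m - I‖ * (2 ^ m * ‖(μ : ℂ) ^ m - I‖)) := by gcongr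
    _ = _ := by rw [show (4 : ℝ) ^ m = 2 ^ m * 2 ^ m by rw [← mul_pow]; norm_num]; ring

/-- Boundedness of the kernel `K(λ,μ) = (f(λ)-f(μ))/(g(λ)-g(μ))` with
`f(λ) = (λ^m - i)⁻¹` and `g(λ) = (λ-ia)^{-m}` in the region `|λ| ≥ 2r`, `|μ| ≥ 2r`,
for `m` odd and `a > 0` sufficiently small. -/
theorem kernel_bounded_at_infinity (m : ℕ) (hm : 0 < m) (hodd : Odd m)
    (r : ℝ) (hr : 0 < r) :
    ∃ a₀ > 0, ∀ a : ℝ, 0 < a → a ≤ a₀ → ∃ C : ℝ,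
      ∀ l μ : ℝ, 2 * r ≤ |l| → 2 * r ≤ |μ| →
        ‖((l : ℂ) ^ m - Complex.I)⁻¹ - ((μ : ℂ) ^ m - Complex.I)⁻¹‖ ≤
          C * ‖((l : ℂ) - (a : ℂ) * Complex.I) ^ (-(m : ℤ)) -
            ((μ : ℂ) - (a : ℂ) * Complex.I) ^ (-(m : ℤ))‖ :=
  kernel_bounded_at_infinity_general m hodd r hr
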